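/- Let Π(z) = z + a z^m + O(z^{m+1}) be a holomorphic germ at 0 in ℂ with a ≠ 0 and m ≥ 2 (a parabolic germ tangent to the identity). Then for any point z in an attracting petal of Π, the iterates satisfy Π^n(z) → 0 as n → ∞. -/

import Mathlib

/-!
In the Fatou coordinate `w = -1 / (k a z ^ k)`, `k = m - 1`, the germ becomes
`w ↦ w + 1 + o(1)` as `z → 0`. Let `P` be the preimage of a truncated sector
`{w | R < Re w, |Im w| < Re w}` with `R` so large that the error is at most `1/2` there.
Such a sector absorbs these perturbed translations, so `P` is invariant and `Re w` grows by
at least `1/2` per step; hence `w → ∞` along orbits, i.e. `z → 0`.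
-/

open Filter Metric Topology Asymptotics Set

noncomputable def fatouCoord (c : ℂ) (k : ℕ) (z : ℂ) : ℂ := -(c * z ^ k)⁻¹

def fatouSector (R : ℝ) : Set ℂ := {w | R < w.re ∧ |w.im| < w.re}

theorem zero_notMem_fatouSector (R : ℝ) : (0 : ℂ) ∉ fatouSector R := fun h => by
  simpa using h.2

theorem isOpen_fatouSector (R : ℝ) : IsOpen (fatouSector R) :=
  (isOpen_lt continuous_const Complex.continuous_re).inter
    (isOpen_lt Complex.continuous_im.abs Complex.continuous_re)

theorem mem_fatouSector_of_norm_sub_sub_one_le {R : ℝ} {w w' : ℂ} (hw : w ∈ fatouSector R)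
    (h : ‖w' - w - 1‖ ≤ 1 / 2) : w' ∈ fatouSector R ∧ w.re + 1 / 2 ≤ w'.re := by
  have hre := abs_le.1 ((Complex.abs_re_le_norm _).trans h)
  have him := abs_le.1 ((Complex.abs_im_le_norm _).trans h)
  have hwim := abs_lt.1 hw.2
  simp only [Complex.sub_re, Complex.sub_im, Complex.one_re, Complex.one_im] at hre him
  refine ⟨⟨by linarith [hw.1], abs_lt.2 ⟨by linarith, by linarith⟩⟩, by linarith⟩

section FatouCoord

variable {c : ℂ} {k : ℕ}

theorem fatouCoord_zero (hk : k ≠ 0) : fatouCoord c k 0 = 0 := by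
  simp [fatouCoord, hk]

theorem norm_fatouCoord (z : ℂ) : ‖fatouCoord c k z‖ = (‖c‖ * ‖z‖ ^ k)⁻¹ := by
  rw [fatouCoord, norm_neg, norm_inv, norm_mul, norm_pow]

theorem fatouCoord_mul (z w : ℂ) : fatouCoord c k (z * w) = fatouCoord c k z * (w ^ k)⁻¹ := by
  simp only [fatouCoord, mul_pow, mul_inv, neg_mul, mul_assoc]

theorem fatouCoord_surjective (hc : c ≠ 0) (hk : k ≠ 0) :
    Function.Surjective (fatouCoord c k) := by
  intro w
  obtain ⟨z, hz⟩ := IsAlgClosed.exists_pow_nat_eq (-(c * w)⁻¹) (Nat.pos_of_ne_zero hk)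
  refine ⟨z, ?_⟩
  rw [fatouCoord, hz, mul_neg, neg_inv, neg_neg, mul_inv, inv_inv, ← mul_assoc,
    inv_mul_cancel₀ hc, one_mul]

theorem continuousAt_fatouCoord (hc : c ≠ 0) {z : ℂ} (hz : z ≠ 0) :
    ContinuousAt (fatouCoord c k) z :=
  ((continuousAt_const.mul (continuous_pow k).continuousAt).inv₀
    (mul_ne_zero hc (pow_ne_zero k hz))).neg

theorem isOpen_fatouCoord_preimage (hc : c ≠ 0) {U : Set ℂ} (hU : IsOpen U)
    (h0 : fatouCoord c k 0 ∉ U) : IsOpen (fatouCoord c k ⁻¹' U) :=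
  isOpen_iff_mem_nhds.2 fun _ hz =>
    (continuousAt_fatouCoord hc (ne_of_mem_of_not_mem hz h0)).preimage_mem_nhds (hU.mem_nhds hz)

theorem norm_lt_of_inv_lt_norm_fatouCoord {ε : ℝ} (hε : 0 < ε) {z : ℂ}
    (h : (‖c‖ * ε ^ k)⁻¹ < ‖fatouCoord c k z‖) : ‖z‖ < ε := by
  rw [norm_fatouCoord] at h
  have hpos : 0 < ‖c‖ * ‖z‖ ^ k := inv_pos.1 ((by positivity : (0 : ℝ) ≤ _).trans_lt h)
  have hc : 0 < ‖c‖ := pos_of_mul_pos_left hpos (by positivity)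
  have hlt := (inv_lt_inv₀ (by positivity) hpos).1 h
  exact lt_of_pow_lt_pow_left₀ k hε.le (lt_of_mul_lt_mul_left hlt hc.le)

theorem tendsto_nhds_zero_of_tendsto_norm_fatouCoord {ι : Type*} {l : Filter ι} {x : ι → ℂ}
    (h : Tendsto (fun i => ‖fatouCoord c k (x i)‖) l atTop) : Tendsto x l (𝓝 0) :=
  Metric.tendsto_nhds.2 fun ε hε =>
    (h.eventually_gt_atTop (‖c‖ * ε ^ k)⁻¹).mono fun _ hi => by
      simpa using norm_lt_of_inv_lt_norm_fatouCoord hε hi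

theorem zero_mem_closure_fatouCoord_preimage_fatouSector (hc : c ≠ 0) (hk : k ≠ 0) (R : ℝ) :
    (0 : ℂ) ∈ closure (fatouCoord c k ⁻¹' fatouSector R) := by
  set x : ℝ → ℂ := fun t => Function.surjInv (fatouCoord_surjective hc hk) t
  have hx : ∀ t, fatouCoord c k (x t) = t := fun t => Function.surjInv_eq _ _
  have hx0 : Tendsto x atTop (𝓝 0) :=
    tendsto_nhds_zero_of_tendsto_norm_fatouCoord (c := c) (k := k) (by
      simpa [hx] using tendsto_abs_atTop_atTop)
  refine mem_closure_of_tendsto hx0 ?_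
  filter_upwards [eventually_gt_atTop R, eventually_gt_atTop 0] with t hR h0
  simpa [hx, fatouSector, hR] using h0

end FatouCoord

theorem tendsto_iterate_atTop_of_add_le {α : Type*} {f : α → α} {u : α → ℝ} {P : Set α}
    {ε : ℝ} (hε : 0 < ε) (hf : MapsTo f P P) (hu : ∀ x ∈ P, u x + ε ≤ u (f x)) {x : α}
    (hx : x ∈ P) :
    Tendsto (fun n => u (f^[n] x)) atTop atTop := by
  have hlin : ∀ n : ℕ, u x + n * ε ≤ u (f^[n] x) := by
    intro n
    induction n with
    | zero => simp
    | succ n ih =>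
      rw [Function.iterate_succ_apply']
      push_cast
      linarith [hu _ (hf.iterate n hx)]
  exact tendsto_atTop_mono hlin
    (tendsto_atTop_add_const_left _ _ (tendsto_natCast_atTop_atTop.atTop_mul_const hε))

theorem isBigO_inv_one_add_pow_sub (n : ℕ) :
    (fun s : ℂ => ((1 + s) ^ n)⁻¹ - 1 + n * s) =O[𝓝 0] fun s => s ^ 2 := by
  have hcont : Continuous fun s : ℂ => 1 + s := by fun_prop
  have hne : ∀ᶠ s : ℂ in 𝓝 0, 1 + s ≠ 0 := hcont.continuousAt.eventually_ne (by simp)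
  have hu : (fun s : ℂ => (1 + s)⁻¹) =O[𝓝 0] fun _ => (1 : ℂ) :=
    (hcont.continuousAt.inv₀ (by simp)).tendsto.isBigO_one ℂ
  induction n with
  | zero => simpa using isBigO_zero _ _
  | succ n ih =>
    -- with `u = (1 + s)⁻¹`, the expression `e n` of exponent `n` satisfies
    -- `e (n + 1) = u * e n + (n + 1) * s ^ 2 * u`
    refine ((hu.mul ih).add ((hu.mul (isBigO_refl _ _)).const_mul_left (n + 1))).congr' ?_
      (by simp)
    filter_upwards [hne] with s hs
    field_simp
    push_cast
    ring

theorem fatouCoord_sub_fatouCoord_sub_one_eq {a : ℂ} {k : ℕ} (ha : a ≠ 0) (hk : k ≠ 0)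
    {z : ℂ} (hz : z ≠ 0) (w : ℂ) :
    fatouCoord (k * a) k w - fatouCoord (k * a) k z - 1 =
      fatouCoord (k * a) k z * (((1 + (w / z - 1)) ^ k)⁻¹ - 1 + k * (w / z - 1)) +
        (w - (z + a * z ^ (k + 1))) / z ^ (k + 1) / a := by
  have hw : w = z * (w / z) := by field_simp
  nth_rewrite 1 [hw]
  rw [fatouCoord_mul, add_sub_cancel]
  generalize ((w / z) ^ k)⁻¹ = t
  have hk' : (k : ℂ) ≠ 0 := Nat.cast_ne_zero.2 hk
  simp only [fatouCoord]
  field_simp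
  ring

theorem tendsto_fatouCoord_sub_fatouCoord_sub_one {f : ℂ → ℂ} {a : ℂ} {k : ℕ} (ha : a ≠ 0)
    (hk : k ≠ 0) (hf : (fun z => f z - (z + a * z ^ (k + 1))) =o[𝓝 0] fun z => z ^ (k + 1)) :
    Tendsto (fun z => fatouCoord (k * a) k (f z) - fatouCoord (k * a) k z - 1)
      (𝓝[≠] 0) (𝓝 0) := by
  set q := fun z => (f z - (z + a * z ^ (k + 1))) / z ^ (k + 1)
  set s := fun z => f z / z - 1
  have hq : Tendsto q (𝓝[≠] 0) (𝓝 0) :=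
    hf.tendsto_div_nhds_zero.mono_left nhdsWithin_le_nhds
  have hpow : Tendsto (fun z : ℂ => z ^ k) (𝓝[≠] 0) (𝓝 0) :=
    ((continuous_pow k).tendsto' 0 0 (zero_pow hk)).mono_left nhdsWithin_le_nhds
  have hs : s =O[𝓝[≠] 0] fun z => z ^ k := by
    refine ((isBigO_refl (fun z : ℂ => z ^ k) _).mul ((hq.const_add a).isBigO_one ℂ)).congr'
      ?_ (.of_forall fun _ => mul_one _)
    filter_upwards [self_mem_nhdsWithin] with z (hz : z ≠ 0)
    simp only [s, q]
    field_simp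
    ring
  have he : (fun z => ((1 + s z) ^ k)⁻¹ - 1 + k * s z) =O[𝓝[≠] 0] fun z => (z ^ k) ^ 2 :=
    ((isBigO_inv_one_add_pow_sub k).comp_tendsto (hs.trans_tendsto hpow)).trans (hs.pow 2)
  have hφ : fatouCoord (k * a) k =O[𝓝[≠] 0] fun z => (z ^ k)⁻¹ :=
    ((isBigO_refl _ _).const_mul_left (-((k : ℂ) * a)⁻¹)).congr_left fun z => by
      simp only [fatouCoord, mul_inv, neg_mul]
  have h1 : Tendsto (fun z => fatouCoord (k * a) k z * (((1 + s z) ^ k)⁻¹ - 1 + k * s z))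
      (𝓝[≠] 0) (𝓝 0) := by
    refine (hφ.mul he).trans_tendsto (hpow.congr' ?_)
    filter_upwards [self_mem_nhdsWithin] with z (hz : z ≠ 0)
    field_simp
  have h2 : Tendsto (fun z => q z / a) (𝓝[≠] 0) (𝓝 0) := by simpa using hq.div_const a
  refine (add_zero (0 : ℂ) ▸ h1.add h2).congr' ?_
  filter_upwards [self_mem_nhdsWithin] with z (hz : z ≠ 0)
  exact (fatouCoord_sub_fatouCoord_sub_one_eq ha hk hz (f z)).symm

theorem stmt0_general (Pi : ℂ → ℂ) (a : ℂ) (m : ℕ) (r : ℝ) (hr : 0 < r)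
    (ha : a ≠ 0) (hm : 2 ≤ m)
    (hasym : ∃ C : ℝ, ∀ z ∈ ball (0 : ℂ) r,
      ‖Pi z - (z + a * z ^ m)‖ ≤ C * ‖z‖ ^ (m + 1)) :
    ∃ P : Set ℂ, IsOpen P ∧ P ⊆ ball (0 : ℂ) r ∧ P.Nonempty ∧
      (0 : ℂ) ∈ closure P ∧ (0 : ℂ) ∉ P ∧ Set.MapsTo Pi P P ∧
      ∀ z ∈ P, Tendsto (fun n => Pi^[n] z) atTop (nhds 0) := by
  obtain ⟨k, rfl⟩ : ∃ k, m = k + 1 := ⟨m - 1, by omega⟩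
  have hk : k ≠ 0 := by omega
  have hc : (k * a : ℂ) ≠ 0 := mul_ne_zero (Nat.cast_ne_zero.2 hk) ha
  set φ := fatouCoord (k * a) k
  have hlo : (fun z => Pi z - (z + a * z ^ (k + 1))) =o[𝓝 0] fun z => z ^ (k + 1) := by
    obtain ⟨C, hC⟩ := hasym
    refine (IsBigO.of_bound C (eventually_of_mem (ball_mem_nhds 0 hr) fun z hz => ?_))
      |>.trans_isLittleO (isLittleO_pow_pow (by omega : k + 1 < k + 2))
    simpa [norm_pow] using hC z hz
  obtain ⟨δ, hδ, hδr, hstep⟩ : ∃ δ > 0, δ ≤ r ∧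
      ∀ z, ‖z‖ < δ → z ≠ 0 → ‖φ (Pi z) - φ z - 1‖ ≤ 1 / 2 := by
    have h := (tendsto_fatouCoord_sub_fatouCoord_sub_one ha hk hlo).eventually
      (closedBall_mem_nhds (0 : ℂ) (by norm_num : (0 : ℝ) < 1 / 2))
    obtain ⟨ε, hε, hball⟩ := Metric.eventually_nhds_iff.1 (eventually_nhdsWithin_iff.1 h)
    refine ⟨min ε r, lt_min hε hr, min_le_right _ _, fun z hz hz0 => ?_⟩
    simpa using hball (by simpa using hz.trans_le (min_le_left _ _)) hz0
  set P := φ ⁻¹' fatouSector (‖(k * a : ℂ)‖ * δ ^ k)⁻¹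
  have h0P : (0 : ℂ) ∉ P := by simpa [P, φ, fatouCoord_zero hk] using zero_notMem_fatouSector _
  have hsmall : ∀ z ∈ P, ‖z‖ < δ := fun z hz =>
    norm_lt_of_inv_lt_norm_fatouCoord hδ (hz.1.trans_le (Complex.re_le_norm _))
  have hstepP : ∀ z ∈ P, Pi z ∈ P ∧ (φ z).re + 1 / 2 ≤ (φ (Pi z)).re := fun z hz =>
    mem_fatouSector_of_norm_sub_sub_one_le hz
      (hstep z (hsmall z hz) (ne_of_mem_of_not_mem hz h0P))
  have hcl : (0 : ℂ) ∈ closure P := zero_mem_closure_fatouCoord_preimage_fatouSector hc hk _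
  refine ⟨P, isOpen_fatouCoord_preimage hc (isOpen_fatouSector _) h0P,
    fun z hz => mem_ball_zero_iff.2 ((hsmall z hz).trans_le hδr),
    closure_nonempty_iff.1 ⟨0, hcl⟩, hcl, h0P, fun z hz => (hstepP z hz).1, fun z hz => ?_⟩
  have hre := tendsto_iterate_atTop_of_add_le one_half_pos (fun z hz => (hstepP z hz).1)
    (fun z hz => (hstepP z hz).2) hz
  exact tendsto_nhds_zero_of_tendsto_norm_fatouCoord
    (tendsto_atTop_mono (fun n => Complex.re_le_norm _) hre)

/-- Leau–Fatou: for a parabolic germ `Pi(z) = z + a z^m + O(z^{m+1})` with `a ≠ 0`,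
`m ≥ 2`, there is an attracting petal `P` (an open set accumulating at `0`,
invariant under `Pi`) on which all forward orbits converge to `0`. -/
theorem stmt0 (Pi : ℂ → ℂ) (a : ℂ) (m : ℕ) (r : ℝ) (hr : 0 < r)
    (hPi : DifferentiableOn ℂ Pi (ball (0 : ℂ) r))
    (hPi0 : Pi 0 = 0) (ha : a ≠ 0) (hm : 2 ≤ m)
    (hasym : ∃ C : ℝ, ∀ z ∈ ball (0 : ℂ) r,
      ‖Pi z - (z + a * z ^ m)‖ ≤ C * ‖z‖ ^ (m + 1)) :
    ∃ P : Set ℂ, IsOpen P ∧ P ⊆ ball (0 : ℂ) r ∧ P.Nonempty ∧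
      (0 : ℂ) ∈ closure P ∧ (0 : ℂ) ∉ P ∧ Set.MapsTo Pi P P ∧
      ∀ z ∈ P, Tendsto (fun n => Pi^[n] z) atTop (nhds 0) :=
  stmt0_general Pi a m r hr ha hm hasym
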